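/- arXiv:2103.03660 — 2 statements merged into one kernel-verified Lean document; each statement's English description precedes it below -/
import Mathlib

section
/- Let X be a topological space, let a < b be real numbers and let a ≤ a' < b' ≤ b. Let v : [a,b] × X → ℝ be a family of functions such that: (i) for each λ ∈ [a,b] the function x ↦ v(λ,x) is upper semicontinuous on X; (ii) for each x ∈ X the function λ ↦ v(λ,x) is concave on [a,b]; (iii) for each λ ∈ [a',b'] and each x ∈ X there is a neighborhood of x on which y ↦ v(λ,y) is bounded above and below. Then the function u(x) := sup_{λ ∈ [a,b]} v(λ,x) is upper semicontinuous on X. -/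
set_option maxHeartbeats 1000000

/-- A real-valued concave function on `[a,b]` has bounded-above image. -/
lemma concave_bddAbove_aux {a b : ℝ} (hab : a < b) {f : ℝ → ℝ}
    (hf : ConcaveOn ℝ (Set.Icc a b) f) : BddAbove (f '' Set.Icc a b) := by
  refine ⟨2 * f ((a + b) / 2) - min (f a) (f b), ?_⟩
  rintro _ ⟨l, ⟨hl1, hl2⟩, rfl⟩
  obtain ⟨l', hl'⟩ : ∃ l', l' = a + b - l := ⟨_, rfl⟩
  have hl'mem : l' ∈ Set.Icc a b := ⟨by rw [hl']; linarith, by rw [hl']; linarith⟩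
  have hmid : (1/2 : ℝ) * f l + (1/2) * f l' ≤ f ((a + b) / 2) := by
    have h2 := hf.2 (Set.mem_Icc.2 ⟨hl1, hl2⟩) hl'mem (by norm_num : (0:ℝ) ≤ 1/2)
      (by norm_num : (0:ℝ) ≤ 1/2) (by norm_num)
    simp only [smul_eq_mul] at h2
    have hpt : (1/2 : ℝ) * l + (1/2) * l' = (a + b) / 2 := by rw [hl']; ring
    rwa [hpt] at h2
  have hchord : min (f a) (f b) ≤ f l' := by
    have hba : (0:ℝ) < b - a := by linarith
    obtain ⟨θ, hθ⟩ : ∃ θ, θ = (b - l') / (b - a) := ⟨_, rfl⟩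
    have hθ0 : 0 ≤ θ := by rw [hθ]; exact div_nonneg (by linarith [hl'mem.2]) hba.le
    have hθ1 : θ ≤ 1 := by rw [hθ, div_le_one hba]; linarith [hl'mem.1]
    have h2 := hf.2 (Set.left_mem_Icc.2 hab.le) (Set.right_mem_Icc.2 hab.le) hθ0
      (by linarith : (0:ℝ) ≤ 1 - θ) (by ring)
    simp only [smul_eq_mul] at h2
    have hpt : θ * a + (1 - θ) * b = l' := by rw [hθ]; field_simp; ring
    rw [hpt] at h2
    calc min (f a) (f b) = θ * min (f a) (f b) + (1 - θ) * min (f a) (f b) := by ring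
      _ ≤ θ * f a + (1 - θ) * f b := by
          have h3 := mul_le_mul_of_nonneg_left (min_le_left (f a) (f b)) hθ0
          have h4 := mul_le_mul_of_nonneg_left (min_le_right (f a) (f b))
            (by linarith : (0:ℝ) ≤ 1 - θ)
          linarith
      _ ≤ f l' := h2
  linarith

/-- Interpolation inequality for a concave function: the value at a convex combination
is at least the corresponding interpolation of lower bounds at the two points. -/
lemma concave_interp_aux {a b : ℝ} {f : ℝ → ℝ} (hf : ConcaveOn ℝ (Set.Icc a b) f)
    {c lam mu m t' θ : ℝ} (hc : c ∈ Set.Icc a b) (hlam : lam ∈ Set.Icc a b)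
    (hθ0 : 0 ≤ θ) (hθ1 : θ ≤ 1) (hpt : mu = θ * c + (1 - θ) * lam)
    (hfc : m ≤ f c) (hfl : t' ≤ f lam) :
    t' - θ * (t' - m) ≤ f mu := by
  have h2 := hf.2 hc hlam hθ0 (by linarith : (0:ℝ) ≤ 1 - θ) (by ring)
  simp only [smul_eq_mul] at h2
  rw [hpt]
  have h3 := mul_le_mul_of_nonneg_left hfc hθ0
  have h4 := mul_le_mul_of_nonneg_left hfl (by linarith : (0:ℝ) ≤ 1 - θ)
  calc t' - θ * (t' - m) = θ * m + (1 - θ) * t' := by ring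
    _ ≤ θ * f c + (1 - θ) * f lam := by linarith
    _ ≤ f (θ * c + (1 - θ) * lam) := h2

/-- Existence of a fine uniform grid step. -/
lemma exists_grid_aux {c e : ℝ} (hc : 0 < c) (he : 0 < e) :
    ∃ (N : ℕ) (h' : ℝ), 0 < N ∧ 0 < h' ∧ (N : ℝ) * h' = c ∧ h' ≤ e := by
  refine ⟨max ⌈c / e⌉₊ 1, c / (max ⌈c / e⌉₊ 1 : ℕ), ?_, ?_, ?_, ?_⟩
  · exact lt_of_lt_of_le one_pos (le_max_right _ _)
  · have hNr : (0:ℝ) < ((max ⌈c / e⌉₊ 1 : ℕ) : ℝ) := by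
      exact_mod_cast lt_of_lt_of_le one_pos (le_max_right _ _)
    positivity
  · have hNr : ((max ⌈c / e⌉₊ 1 : ℕ) : ℝ) ≠ 0 := by
      have : (0:ℕ) < max ⌈c / e⌉₊ 1 := lt_of_lt_of_le one_pos (le_max_right _ _)
      exact_mod_cast this.ne'
    rw [mul_comm, div_mul_cancel₀ _ hNr]
  · have hNr : (0:ℝ) < ((max ⌈c / e⌉₊ 1 : ℕ) : ℝ) := by
      exact_mod_cast lt_of_lt_of_le one_pos (le_max_right _ _)
    rw [div_le_iff₀ hNr]
    have h1 : c / e ≤ (⌈c / e⌉₊ : ℝ) := Nat.le_ceil _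
    have h2 : ((⌈c / e⌉₊ : ℕ) : ℝ) ≤ ((max ⌈c / e⌉₊ 1 : ℕ) : ℝ) := by
      exact_mod_cast le_max_left _ _
    calc c = c / e * e := by field_simp
      _ ≤ ((max ⌈c / e⌉₊ 1 : ℕ) : ℝ) * e := by
          exact mul_le_mul_of_nonneg_right (h1.trans h2) he.le
      _ = e * ((max ⌈c / e⌉₊ 1 : ℕ) : ℝ) := mul_comm _ _

/-- Key grid lemma: if a concave function on `[a,b]` is at least `m` at the two
anchor points `a', b'` and exceeds `t'` somewhere in `[a,b]`, then on a grid of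
step `h'` it exceeds `s` at some grid point. -/
lemma concave_grid_aux {a b a' b' m s t' h' lam : ℝ} {f : ℝ → ℝ} {N : ℕ}
    (haa' : a ≤ a') (ha'b' : a' < b') (hb'b : b' ≤ b)
    (hconc : ConcaveOn ℝ (Set.Icc a b) f)
    (hfa : m ≤ f a') (hfb : m ≤ f b')
    (hmt' : m < t')
    (hh'0 : 0 < h') (hh'd : 4 * h' ≤ b' - a')
    (hslack : 2 * h' * (t' - m) ≤ (t' - s) * (b' - a'))
    (hN : (N : ℝ) * h' = b - a)
    (hlam : lam ∈ Set.Icc a b) (hflam : t' ≤ f lam) :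
    ∃ k : ℕ, k ≤ N ∧ s ≤ f (a + k * h') := by
  have hab : a < b := by nlinarith [hlam.1, hlam.2]
  have ha'mem : a' ∈ Set.Icc a b := ⟨haa', le_trans ha'b'.le hb'b⟩
  have hb'mem : b' ∈ Set.Icc a b := ⟨le_trans haa' ha'b'.le, hb'b⟩
  have hd0 : 0 < b' - a' := by linarith
  have ht'm : 0 < t' - m := by linarith
  by_cases hside : (a' + b') / 2 ≤ lam
  · -- anchor a' lies well to the left of lam
    obtain ⟨k, hkdef⟩ : ∃ k : ℕ, k = ⌊(lam - a) / h'⌋₊ := ⟨_, rfl⟩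
    have hk0 : (0:ℝ) ≤ (lam - a) / h' := div_nonneg (by linarith [hlam.1]) hh'0.le
    have hflo : (k : ℝ) ≤ (lam - a) / h' := by rw [hkdef]; exact Nat.floor_le hk0
    have hflo2 : (lam - a) / h' < (k : ℝ) + 1 := by rw [hkdef]; exact Nat.lt_floor_add_one _
    have hle : (k : ℝ) * h' ≤ lam - a := (le_div_iff₀ hh'0).1 hflo
    have hgap : lam - (a + k * h') < h' := by
      have h1 : lam - a < ((k : ℝ) + 1) * h' := (div_lt_iff₀ hh'0).1 hflo2
      rw [show ((k : ℝ) + 1) * h' = (k : ℝ) * h' + h' from by ring] at h1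
      linarith
    have hkN : k ≤ N := by
      have h1 : (k : ℝ) * h' ≤ (N : ℝ) * h' := by linarith [hlam.2]
      have h2 : (k : ℝ) ≤ (N : ℝ) := le_of_mul_le_mul_right h1 hh'0
      exact_mod_cast h2
    refine ⟨k, hkN, ?_⟩
    clear hkdef hk0 hflo hflo2
    have hmida : (b' - a') / 2 ≤ lam - a' := by linarith
    have hca : 0 < lam - a' := by linarith
    obtain ⟨θ, hθdef⟩ : ∃ θ, θ = (lam - (a + k * h')) / (lam - a') := ⟨_, rfl⟩
    have hθ0 : 0 ≤ θ := by rw [hθdef]; exact div_nonneg (by linarith) hca.le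
    have hθ1 : θ ≤ 1 := by rw [hθdef, div_le_one hca]; linarith
    have hmul : θ * (lam - a') = lam - (a + k * h') := by
      rw [hθdef]; exact div_mul_cancel₀ _ hca.ne'
    have hpt : a + (k : ℝ) * h' = θ * a' + (1 - θ) * lam := by linear_combination hmul
    have hinterp : t' - θ * (t' - m) ≤ f (a + k * h') :=
      concave_interp_aux hconc ha'mem hlam hθ0 hθ1 hpt hfa hflam
    have hθd : θ * (b' - a') ≤ 2 * h' := by
      have q1 : θ * (b' - a') ≤ θ * (2 * (lam - a')) :=
        mul_le_mul_of_nonneg_left (by linarith) hθ0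
      linarith [q1, hmul, hgap]
    have hfin : θ * (t' - m) ≤ t' - s := by
      have e1 : (t' - m) * (θ * (b' - a')) ≤ (t' - m) * (2 * h') :=
        mul_le_mul_of_nonneg_left hθd ht'm.le
      nlinarith [e1, hslack, hd0]
    linarith
  · -- anchor b' lies well to the right of lam
    push_neg at hside
    obtain ⟨k, hkdef⟩ : ∃ k : ℕ, k = ⌈(lam - a) / h'⌉₊ := ⟨_, rfl⟩
    have hk0 : (0:ℝ) ≤ (lam - a) / h' := div_nonneg (by linarith [hlam.1]) hh'0.le
    have hceil : (lam - a) / h' ≤ (k : ℝ) := by rw [hkdef]; exact Nat.le_ceil _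
    have hceil2 : (k : ℝ) < (lam - a) / h' + 1 := by rw [hkdef]; exact Nat.ceil_lt_add_one hk0
    have hge : lam - a ≤ (k : ℝ) * h' := (div_le_iff₀ hh'0).1 hceil
    have hgap : (a + k * h') - lam < h' := by
      have h1 : (k : ℝ) * h' < ((lam - a) / h' + 1) * h' :=
        mul_lt_mul_of_pos_right hceil2 hh'0
      rw [show ((lam - a) / h' + 1) * h' = lam - a + h' from by field_simp] at h1
      linarith
    have hkN : k ≤ N := by
      rw [hkdef]
      apply Nat.ceil_le.2
      rw [div_le_iff₀ hh'0]
      linarith [hlam.2]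
    refine ⟨k, hkN, ?_⟩
    clear hkdef hk0 hceil hceil2
    have hmidb : (b' - a') / 2 ≤ b' - lam := by linarith
    have hcb : 0 < b' - lam := by linarith
    obtain ⟨θ, hθdef⟩ : ∃ θ, θ = ((a + k * h') - lam) / (b' - lam) := ⟨_, rfl⟩
    have hθ0 : 0 ≤ θ := by rw [hθdef]; exact div_nonneg (by linarith) hcb.le
    have hθ1 : θ ≤ 1 := by rw [hθdef, div_le_one hcb]; linarith
    have hmul : θ * (b' - lam) = (a + k * h') - lam := by
      rw [hθdef]; exact div_mul_cancel₀ _ hcb.ne'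
    have hpt : a + (k : ℝ) * h' = θ * b' + (1 - θ) * lam := by linear_combination -hmul
    have hinterp : t' - θ * (t' - m) ≤ f (a + k * h') :=
      concave_interp_aux hconc hb'mem hlam hθ0 hθ1 hpt hfb hflam
    have hθd : θ * (b' - a') ≤ 2 * h' := by
      have q1 : θ * (b' - a') ≤ θ * (2 * (b' - lam)) :=
        mul_le_mul_of_nonneg_left (by linarith) hθ0
      linarith [q1, hmul, hgap]
    have hfin : θ * (t' - m) ≤ t' - s := by
      have e1 : (t' - m) * (θ * (b' - a')) ≤ (t' - m) * (2 * h') :=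
        mul_le_mul_of_nonneg_left hθd ht'm.le
      nlinarith [e1, hslack, hd0]
    linarith

/-- Upper semicontinuity of the pointwise supremum of a concave family of
upper semicontinuous functions, given local two-sided bounds on a subinterval. -/
theorem usc_sup_of_concave_family {X : Type*} [TopologicalSpace X]
    (a b a' b' : ℝ) (hab : a < b) (haa' : a ≤ a') (ha'b' : a' < b') (hb'b : b' ≤ b)
    (v : ℝ → X → ℝ)
    (husc : ∀ l ∈ Set.Icc a b, UpperSemicontinuous (v l))
    (hconc : ∀ x : X, ConcaveOn ℝ (Set.Icc a b) (fun l => v l x))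
    (hbdd : ∀ l ∈ Set.Icc a' b', ∀ x : X, ∃ U ∈ nhds x, ∃ m M : ℝ,
      ∀ y ∈ U, m ≤ v l y ∧ v l y ≤ M) :
    UpperSemicontinuous (fun x => sSup ((fun l => v l x) '' Set.Icc a b)) := by
  have hne : ∀ y : X, ((fun l => v l y) '' Set.Icc a b).Nonempty :=
    fun y => (Set.nonempty_Icc.2 hab.le).image _
  have hbaS : ∀ y : X, BddAbove ((fun l => v l y) '' Set.Icc a b) :=
    fun y => concave_bddAbove_aux hab (hconc y)
  have hvle : ∀ (y : X) (l : ℝ), l ∈ Set.Icc a b →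
      v l y ≤ sSup ((fun l => v l y) '' Set.Icc a b) :=
    fun y l hl => le_csSup (hbaS y) ⟨l, hl, rfl⟩
  intro x t ht
  simp only at ht ⊢
  obtain ⟨s, t', hxs, hst', ht't⟩ :
      ∃ s t', sSup ((fun l => v l x) '' Set.Icc a b) < s ∧ s < t' ∧ t' < t := by
    refine ⟨(3 * sSup ((fun l => v l x) '' Set.Icc a b) + t) / 4,
      (sSup ((fun l => v l x) '' Set.Icc a b) + t) / 2, by linarith, by linarith, by linarith⟩
  obtain ⟨U₁, hU₁, m₁, M₁, hb₁⟩ := hbdd a' ⟨le_refl a', ha'b'.le⟩ x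
  obtain ⟨U₂, hU₂, m₂, M₂, hb₂⟩ := hbdd b' ⟨ha'b'.le, le_refl b'⟩ x
  obtain ⟨m, hm₁, hm₂, hms⟩ : ∃ m, m ≤ m₁ ∧ m ≤ m₂ ∧ m ≤ s - 1 :=
    ⟨min (min m₁ m₂) (s - 1), (min_le_left _ _).trans (min_le_left _ _),
      (min_le_left _ _).trans (min_le_right _ _), min_le_right _ _⟩
  have hmt' : m < t' := by linarith
  have ht'm : 0 < t' - m := by linarith
  have hd0 : 0 < b' - a' := by linarith
  obtain ⟨e, he0, he1, he2⟩ :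
      ∃ e : ℝ, 0 < e ∧ 2 * e * (t' - m) ≤ (t' - s) * (b' - a') ∧ 4 * e ≤ b' - a' := by
    refine ⟨min ((t' - s) * (b' - a') / (2 * (t' - m))) ((b' - a') / 4),
      lt_min (div_pos (mul_pos (by linarith) hd0) (by linarith)) (by linarith), ?_, ?_⟩
    · have h1 : min ((t' - s) * (b' - a') / (2 * (t' - m))) ((b' - a') / 4) ≤
          (t' - s) * (b' - a') / (2 * (t' - m)) := min_le_left _ _
      rw [le_div_iff₀ (by linarith : (0:ℝ) < 2 * (t' - m))] at h1
      linarith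
    · have h1 : min ((t' - s) * (b' - a') / (2 * (t' - m))) ((b' - a') / 4) ≤
          (b' - a') / 4 := min_le_right _ _
      linarith
  obtain ⟨N, h', hN0, hh'0, hNh', hh'e⟩ := exists_grid_aux (by linarith : (0:ℝ) < b - a) he0
  have hslack : 2 * h' * (t' - m) ≤ (t' - s) * (b' - a') := by nlinarith
  have hh'd : 4 * h' ≤ b' - a' := by linarith
  have hgrid_mem : ∀ k : ℕ, k ≤ N → a + k * h' ∈ Set.Icc a b := by
    intro k hk
    have hk0 : (0:ℝ) ≤ (k : ℝ) * h' := mul_nonneg (Nat.cast_nonneg k) hh'0.le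
    have hkr : (k : ℝ) ≤ N := by exact_mod_cast hk
    have hkb : (k : ℝ) * h' ≤ (N : ℝ) * h' := mul_le_mul_of_nonneg_right hkr hh'0.le
    exact ⟨by linarith, by linarith⟩
  have hev : ∀ᶠ y in nhds x, ∀ k ∈ Finset.range (N + 1), v (a + k * h') y < s := by
    rw [Filter.eventually_all_finset]
    intro k hk
    have hkN : k ≤ N := Nat.lt_succ_iff.1 (Finset.mem_range.1 hk)
    exact husc _ (hgrid_mem k hkN) x s (lt_of_le_of_lt (hvle x _ (hgrid_mem k hkN)) hxs)
  filter_upwards [hU₁, hU₂, hev] with y hy1 hy2 hyg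
  by_contra hcon
  push_neg at hcon
  have hlt : t' < sSup ((fun l => v l y) '' Set.Icc a b) := lt_of_lt_of_le ht't hcon
  obtain ⟨r, hrS, hrt⟩ := exists_lt_of_lt_csSup (hne y) hlt
  obtain ⟨lam, hlam, rfl⟩ := hrS
  have hva : m ≤ v a' y := hm₁.trans (hb₁ y hy1).1
  have hvb : m ≤ v b' y := hm₂.trans (hb₂ y hy2).1
  obtain ⟨k, hkN, hks⟩ := concave_grid_aux haa' ha'b' hb'b (hconc y) hva hvb hmt'
    hh'0 hh'd hslack hNh' hlam (le_of_lt hrt)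
  exact absurd hks (not_le.2 (hyg k (Finset.mem_range.2 (Nat.lt_succ_of_le hkN))))
end

section
/- Let a < b be real numbers, let a ≤ a' < b' ≤ b, set m := (a'+b')/2, and let v : ℝ → ℝ be concave on [a,b]. Suppose v(m) − v(a') ≤ C₁ and v(m) − v(b') ≤ C₂ for constants C₁, C₂. Then: (1) for all λ₁, λ₂ with m ≤ λ₁ < λ₂ ≤ b one has v(λ₂) − v(λ₁) ≤ (2C₁/(b'−a'))·(λ₂ − λ₁); and (2) for all λ₁, λ₂ with a ≤ λ₁ < λ₂ ≤ m one has v(λ₁) − v(λ₂) ≤ (2C₂/(b'−a'))·(λ₂ − λ₁). -/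
/-- Slopes of a concave function are antitone: the slope over a later interval
is at most the slope over an earlier interval. -/
lemma concave_slope_anti {a b : ℝ} {v : ℝ → ℝ} (hv : ConcaveOn ℝ (Set.Icc a b) v)
    {x y z w : ℝ} (hx : x ∈ Set.Icc a b) (hy : y ∈ Set.Icc a b)
    (hz : z ∈ Set.Icc a b) (hw : w ∈ Set.Icc a b)
    (hxy : x < y) (hzw : z < w) (hxz : x ≤ z) (hyw : y ≤ w) :
    (v w - v z) / (w - z) ≤ (v y - v x) / (y - x) := by
  have hg : ConvexOn ℝ (Set.Icc a b) (-v) := hv.neg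
  have hxw : x < w := lt_of_lt_of_le hxy hyw
  have h1 := hg.secant_mono hx hy hw (ne_of_gt hxy) (ne_of_gt hxw) hyw
  have h2 := hg.secant_mono hw hx hz (ne_of_lt hxw) (ne_of_lt hzw) hxz
  simp only [Pi.neg_apply] at h1 h2
  have e1 : (-v y - -v x) / (y - x) = -((v y - v x) / (y - x)) := by ring
  have e2 : (-v w - -v x) / (w - x) = -((v w - v x) / (w - x)) := by ring
  have e3 : (-v x - -v w) / (x - w) = -((v w - v x) / (w - x)) := by
    rw [neg_div', div_eq_div_iff (sub_ne_zero.mpr hxw.ne) (sub_ne_zero.mpr hxw.ne')]; ring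
  have e4 : (-v z - -v w) / (z - w) = -((v w - v z) / (w - z)) := by
    rw [neg_div', div_eq_div_iff (sub_ne_zero.mpr hzw.ne) (sub_ne_zero.mpr hzw.ne')]; ring
  rw [e1, e2] at h1
  rw [e3, e4] at h2
  linarith

/-- Two-sided increment bounds for a concave function controlled at the three
points `a'`, `(a'+b')/2` and `b'`. -/
theorem concave_increment_bounds (a b a' b' C₁ C₂ : ℝ) (hab : a < b)
    (haa' : a ≤ a') (ha'b' : a' < b') (hb'b : b' ≤ b)
    (v : ℝ → ℝ) (hv : ConcaveOn ℝ (Set.Icc a b) v)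
    (h₁ : v ((a' + b') / 2) - v a' ≤ C₁)
    (h₂ : v ((a' + b') / 2) - v b' ≤ C₂) :
    (∀ l₁ l₂ : ℝ, (a' + b') / 2 ≤ l₁ → l₁ < l₂ → l₂ ≤ b →
      v l₂ - v l₁ ≤ (2 * C₁ / (b' - a')) * (l₂ - l₁)) ∧
    (∀ l₁ l₂ : ℝ, a ≤ l₁ → l₁ < l₂ → l₂ ≤ (a' + b') / 2 →
      v l₁ - v l₂ ≤ (2 * C₂ / (b' - a')) * (l₂ - l₁)) := by
  set m := (a' + b') / 2 with hm
  have hba' : 0 < b' - a' := by linarith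
  have ha'm : a' < m := by simp [hm]; linarith
  have hmb' : m < b' := by simp [hm]; linarith
  have ha'mem : a' ∈ Set.Icc a b := ⟨haa', by linarith⟩
  have hmmem : m ∈ Set.Icc a b := ⟨by linarith, by linarith⟩
  have hb'mem : b' ∈ Set.Icc a b := ⟨by linarith, hb'b⟩
  constructor
  · intro l₁ l₂ hml₁ hl₁₂ hl₂b
    have hl₁mem : l₁ ∈ Set.Icc a b := ⟨by linarith, by linarith⟩
    have hl₂mem : l₂ ∈ Set.Icc a b := ⟨by linarith, hl₂b⟩
    have hs := concave_slope_anti hv ha'mem hmmem hl₁mem hl₂mem ha'm hl₁₂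
      (by linarith) (by linarith)
    have hma' : m - a' = (b' - a') / 2 := by simp [hm]; ring
    have hslope : (v m - v a') / (m - a') ≤ 2 * C₁ / (b' - a') := by
      rw [hma', div_le_div_iff₀ (by linarith) hba']
      nlinarith
    have hd : 0 < l₂ - l₁ := by linarith
    calc v l₂ - v l₁ = (v l₂ - v l₁) / (l₂ - l₁) * (l₂ - l₁) := by
          field_simp
      _ ≤ 2 * C₁ / (b' - a') * (l₂ - l₁) := by
          apply mul_le_mul_of_nonneg_right (le_trans hs hslope) (le_of_lt hd)
  · intro l₁ l₂ hal₁ hl₁₂ hl₂m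
    have hl₁mem : l₁ ∈ Set.Icc a b := ⟨hal₁, by linarith⟩
    have hl₂mem : l₂ ∈ Set.Icc a b := ⟨by linarith, by linarith⟩
    have hs := concave_slope_anti hv hl₁mem hl₂mem hmmem hb'mem hl₁₂ hmb'
      (by linarith) (by linarith)
    have hb'm : b' - m = (b' - a') / 2 := by simp [hm]; ring
    have hslope : -(2 * C₂ / (b' - a')) ≤ (v b' - v m) / (b' - m) := by
      rw [hb'm, le_div_iff₀ (by linarith)]
      have h2C : 0 < (2:ℝ) := two_pos
      have : -(2 * C₂ / (b' - a')) * ((b' - a') / 2) = -C₂ := by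
        field_simp
      rw [this]
      linarith
    have hd : 0 < l₂ - l₁ := by linarith
    have key : -(2 * C₂ / (b' - a')) ≤ (v l₂ - v l₁) / (l₂ - l₁) := le_trans hslope hs
    have := mul_le_mul_of_nonneg_right key (le_of_lt hd)
    rw [div_mul_cancel₀ _ (ne_of_gt hd)] at this
    linarith
end
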